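/- arXiv:2311.04337 — 2 statements merged into one kernel-verified Lean document; each statement's English description precedes it below -/
import Mathlib

section
/- Let D=(V,A) be a digraph with minimum dicut size τ whose underlying undirected graph G admits a nowhere-zero circular k-flow (k ≥ 2 rational). Let G⃗ have arcs A ∪ A⁻¹ with weights w^D (τ on A, 1 on A⁻¹). Then there exists an integral vector x with 0 ≤ x ≤ w^D such that both x and w^D − x are ⌊τ/k⌋-strongly-connected: for every nonempty proper U⊆V, x(δ⁺(U)) ≥ ⌊τ/k⌋ and (w^D−x)(δ⁺(U)) ≥ ⌊τ/k⌋. -/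
open Finset

variable {V A : Type*} [Fintype V] [DecidableEq V] [Fintype A] [DecidableEq A]

/-- The arcs leaving the vertex set `U`. -/
def outArcs (src tgt : A → V) (U : Finset V) : Finset A :=
  univ.filter fun a => src a ∈ U ∧ tgt a ∉ U

/-- The arcs entering the vertex set `U`. -/
def inArcs (src tgt : A → V) (U : Finset V) : Finset A :=
  univ.filter fun a => tgt a ∈ U ∧ src a ∉ U

/-- `U` induces a dicut: nonempty, proper, no entering arcs (the dicut is `outArcs U`). -/
def IsDicut (src tgt : A → V) (U : Finset V) : Prop :=
  U.Nonempty ∧ U ≠ univ ∧ inArcs src tgt U = ∅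

/-- A dijoin: an arc set meeting every dicut. -/
def IsDijoin (src tgt : A → V) (J : Finset A) : Prop :=
  ∀ U : Finset V, IsDicut src tgt U → (outArcs src tgt U ∩ J).Nonempty

/-- Tail of an arc under the orientation `o` of the underlying undirected graph. -/
def otail (src tgt : A → V) (o : A → Bool) (a : A) : V := if o a then src a else tgt a

/-- Head of an arc under the orientation `o` of the underlying undirected graph. -/
def ohead (src tgt : A → V) (o : A → Bool) (a : A) : V := if o a then tgt a else src a

/-- The underlying undirected graph admits a nowhere-zero circular `k`-flow: an orientation
`o` of the edges together with a circulation `f` with `1 ≤ f_e ≤ k - 1` everywhere. -/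
def HasNZCircularFlow (src tgt : A → V) (k : ℚ) : Prop :=
  ∃ (o : A → Bool) (f : A → ℚ),
    (∀ v : V, ∑ a ∈ univ.filter (fun a => otail src tgt o a = v), f a
            = ∑ a ∈ univ.filter (fun a => ohead src tgt o a = v), f a) ∧
    ∀ a : A, 1 ≤ f a ∧ f a ≤ k - 1

/-- Source of an arc in the augmented digraph `A × Bool` (`true` = original copy,
`false` = reversed copy). -/
def asrc (src tgt : A → V) (p : A × Bool) : V := if p.2 then src p.1 else tgt p.1

/-- Target of an arc in the augmented digraph. -/
def atgt (src tgt : A → V) (p : A × Bool) : V := if p.2 then tgt p.1 else src p.1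

/-! The circular flow makes its orientation `E⁺` `k`-cut-balanced: across every cut the flow out
equals the flow in and each edge carries between `1` and `k - 1`, so each direction holds at least
a `1/k` fraction of the crossing edges. A cut left by an original arc gets `⌊τ/2⌋ ≥ ⌊τ/k⌋` from that
arc in both `x` and `w - x`. A cut left by no original arc is the shore of a dicut, so at least `τ`
edges cross it; there `x` counts the edges of `E⁺` leaving it and `w - x` those entering it. -/

section Circulation

omit [Fintype V] [DecidableEq A]

variable {M : Type*} [AddCommGroup M]

def IsCirculation (t h : A → V) (f : A → M) : Prop :=
  ∀ v : V, ∑ a ∈ univ.filter (fun a => t a = v), f a = ∑ a ∈ univ.filter (fun a => h a = v), f a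

theorem IsCirculation.symm {t h : A → V} {f : A → M} (hf : IsCirculation t h f) :
    IsCirculation h t f :=
  fun v => (hf v).symm

theorem sum_ite_mem_eq_sum_fiberwise (g : A → V) (f : A → M) (U : Finset V) :
    ∑ a, (if g a ∈ U then f a else 0) = ∑ v ∈ U, ∑ a ∈ univ.filter (fun a => g a = v), f a := by
  rw [← sum_filter, ← sum_fiberwise_of_maps_to (t := U) (g := g) (by simp)]
  refine sum_congr rfl fun v hv => sum_congr ?_ fun _ _ => rfl
  ext a
  simp only [mem_filter, mem_univ, true_and, and_iff_right_iff_imp]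
  exact fun h => h ▸ hv

theorem IsCirculation.sum_outArcs_eq_sum_inArcs {t h : A → V} {f : A → M}
    (hf : IsCirculation t h f) (U : Finset V) :
    ∑ a ∈ outArcs t h U, f a = ∑ a ∈ inArcs t h U, f a := by
  rw [← sub_eq_zero]
  calc ∑ a ∈ outArcs t h U, f a - ∑ a ∈ inArcs t h U, f a
      = ∑ a, ((if t a ∈ U then f a else 0) - (if h a ∈ U then f a else 0)) := by
        rw [outArcs, inArcs, sum_filter, sum_filter, ← sum_sub_distrib]
        refine sum_congr rfl fun a _ => ?_
        by_cases hta : t a ∈ U <;> by_cases hha : h a ∈ U <;> simp [hta, hha]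
    _ = ∑ v ∈ U, (∑ a ∈ univ.filter (fun a => t a = v), f a
          - ∑ a ∈ univ.filter (fun a => h a = v), f a) := by
        rw [sum_sub_distrib, sum_sub_distrib, sum_ite_mem_eq_sum_fiberwise,
          sum_ite_mem_eq_sum_fiberwise]
    _ = 0 := sum_eq_zero fun v _ => sub_eq_zero.2 (hf v)

theorem IsCirculation.card_inArcs_le {K : Type*} [CommRing K] [PartialOrder K] [IsOrderedRing K]
    {t h : A → V} {f : A → K} {k : K} (hf : IsCirculation t h f)
    (hbd : ∀ a : A, 1 ≤ f a ∧ f a ≤ k - 1) (U : Finset V) :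
    ((inArcs t h U).card : K) ≤ (k - 1) * (outArcs t h U).card :=
  calc ((inArcs t h U).card : K) = (inArcs t h U).card • (1 : K) := by simp
    _ ≤ ∑ a ∈ inArcs t h U, f a := card_nsmul_le_sum _ _ _ fun a _ => (hbd a).1
    _ = ∑ a ∈ outArcs t h U, f a := (hf.sum_outArcs_eq_sum_inArcs U).symm
    _ ≤ (outArcs t h U).card • (k - 1) := sum_le_card_nsmul _ _ _ fun a _ => (hbd a).2
    _ = (k - 1) * (outArcs t h U).card := by rw [nsmul_eq_mul, mul_comm]

end Circulation

section Orientation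

omit [Fintype V]

theorem outArcs_otail_ohead (src tgt : A → V) (o : A → Bool) (U : Finset V) :
    outArcs (otail src tgt o) (ohead src tgt o) U
      = (outArcs src tgt U).filter (o · = true) ∪ (inArcs src tgt U).filter (o · = false) := by
  ext a
  simp only [outArcs, inArcs, mem_union, mem_filter, mem_univ, true_and]
  cases ho : o a <;> simp [otail, ohead, ho]

theorem inArcs_otail_ohead (src tgt : A → V) (o : A → Bool) (U : Finset V) :
    inArcs (otail src tgt o) (ohead src tgt o) U
      = (inArcs src tgt U).filter (o · = true) ∪ (outArcs src tgt U).filter (o · = false) := by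
  ext a
  simp only [outArcs, inArcs, mem_union, mem_filter, mem_univ, true_and]
  cases ho : o a <;> simp [otail, ohead, ho]

variable {src tgt : A → V} {U : Finset V} (h : outArcs src tgt U = ∅) (o : A → Bool)
include h

theorem outArcs_otail_ohead_of_outArcs_eq_empty :
    outArcs (otail src tgt o) (ohead src tgt o) U = (inArcs src tgt U).filter (o · = false) := by
  simp [outArcs_otail_ohead, h]

theorem inArcs_otail_ohead_of_outArcs_eq_empty :
    inArcs (otail src tgt o) (ohead src tgt o) U = (inArcs src tgt U).filter (o · = true) := by
  simp [inArcs_otail_ohead, h]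

theorem card_inArcs_of_outArcs_eq_empty :
    (inArcs src tgt U).card = (outArcs (otail src tgt o) (ohead src tgt o) U).card
      + (inArcs (otail src tgt o) (ohead src tgt o) U).card := by
  rw [outArcs_otail_ohead_of_outArcs_eq_empty h, inArcs_otail_ohead_of_outArcs_eq_empty h]
  simpa [add_comm] using (card_filter_add_card_filter_not (s := inArcs src tgt U) (o · = true)).symm

end Orientation

section Dicut

omit [DecidableEq A]

theorem outArcs_compl (src tgt : A → V) (U : Finset V) :
    outArcs src tgt Uᶜ = inArcs src tgt U := by
  ext a
  simp [outArcs, inArcs, and_comm]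

theorem inArcs_compl (src tgt : A → V) (U : Finset V) :
    inArcs src tgt Uᶜ = outArcs src tgt U := by
  ext a
  simp [outArcs, inArcs, and_comm]

theorem isDicut_compl_of_outArcs_eq_empty {src tgt : A → V} {U : Finset V} (hU : U.Nonempty)
    (hU' : U ≠ univ) (h : outArcs src tgt U = ∅) : IsDicut src tgt Uᶜ := by
  refine ⟨?_, (compl_ne_univ_iff_nonempty U).2 hU, by rwa [inArcs_compl]⟩
  rwa [nonempty_iff_ne_empty, ne_eq, compl_eq_empty_iff]

end Dicut

section Augmented

omit [Fintype V] [DecidableEq A]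

variable (src tgt : A → V) (U : Finset V)

theorem sum_outArcs_asrc_atgt {M : Type*} [AddCommMonoid M] (g : A × Bool → M) :
    ∑ p ∈ outArcs (asrc src tgt) (atgt src tgt) U, g p
      = ∑ a ∈ outArcs src tgt U, g (a, true) + ∑ a ∈ inArcs src tgt U, g (a, false) := by
  rw [outArcs, outArcs, inArcs, sum_filter, sum_filter, sum_filter, Fintype.sum_prod_type,
    ← sum_add_distrib]
  refine sum_congr rfl fun a _ => ?_
  rw [Fintype.sum_bool]
  simp [asrc, atgt, add_comm]

theorem mk_true_mem_outArcs_asrc_atgt (a : A) :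
    (a, true) ∈ outArcs (asrc src tgt) (atgt src tgt) U ↔ a ∈ outArcs src tgt U := by
  simp only [outArcs, mem_filter, mem_univ, true_and]
  simp [asrc, atgt]

end Augmented

theorem floor_div_le_of_le_mul {K : Type*} [Field K] [LinearOrder K] [IsStrictOrderedRing K]
    [FloorRing K] {a k : K} {n : ℤ} (hk : 0 < k) (h : a ≤ k * n) : ⌊a / k⌋ ≤ n :=
  Int.floor_le_iff.2 <| ((div_le_iff₀' hk).2 h).trans_lt (lt_add_one _)

theorem floor_div_le_half (τ : ℕ) {k : ℚ} (hk : 2 ≤ k) : ⌊(τ : ℚ) / k⌋ ≤ (τ : ℤ) / 2 := by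
  calc ⌊(τ : ℚ) / k⌋ ≤ ⌊(τ : ℚ) / 2⌋ :=
        Int.floor_le_floor (div_le_div_of_nonneg_left τ.cast_nonneg two_pos hk)
    _ = (τ : ℤ) / 2 := by simpa using Int.floor_div_natCast (τ : ℚ) 2

/-- The weight `x` of the construction, with `o` the orientation `E⁺` and `(τ + 1) / 2 = ⌈τ/2⌉`. -/
def splitWeight (o : A → Bool) (τ : ℕ) : A × Bool → ℤ
  | (a, true) => if o a then ((τ : ℤ) + 1) / 2 else (τ : ℤ) / 2
  | (a, false) => if o a then 0 else 1

section SplitWeight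

omit [Fintype A] [DecidableEq A]

variable (o : A → Bool) (τ : ℕ)

theorem splitWeight_nonneg_le (p : A × Bool) :
    0 ≤ splitWeight o τ p ∧ splitWeight o τ p ≤ if p.2 then (τ : ℤ) else 1 := by
  obtain ⟨a, _ | _⟩ := p <;> cases o a <;> simp [splitWeight] <;> omega

theorem half_le_splitWeight_true (a : A) :
    (τ : ℤ) / 2 ≤ splitWeight o τ (a, true) ∧ (τ : ℤ) / 2 ≤ τ - splitWeight o τ (a, true) := by
  cases o a <;> simp [splitWeight] <;> omega

end SplitWeight

section SplitWeightCuts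

omit [Fintype V]

variable {src tgt : A → V} {U : Finset V} (o : A → Bool) (τ : ℕ)

omit [DecidableEq A] in
theorem half_le_sum_splitWeight_of_mem {a : A} (ha : a ∈ outArcs src tgt U) :
    (τ : ℤ) / 2 ≤ ∑ p ∈ outArcs (asrc src tgt) (atgt src tgt) U, splitWeight o τ p ∧
      (τ : ℤ) / 2 ≤ ∑ p ∈ outArcs (asrc src tgt) (atgt src tgt) U,
        ((if p.2 then (τ : ℤ) else 1) - splitWeight o τ p) := by
  have ha' := (mk_true_mem_outArcs_asrc_atgt src tgt U a).2 ha
  have hhalf := half_le_splitWeight_true o τ a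
  constructor
  · calc _ ≤ splitWeight o τ (a, true) := hhalf.1
      _ ≤ _ := single_le_sum (fun p _ => (splitWeight_nonneg_le o τ p).1) ha'
  · calc _ ≤ (τ : ℤ) - splitWeight o τ (a, true) := hhalf.2
      _ ≤ _ := single_le_sum (f := fun p => (if p.2 then (τ : ℤ) else 1) - splitWeight o τ p)
          (fun p _ => sub_nonneg.2 (splitWeight_nonneg_le o τ p).2) ha'

variable {o} (h : outArcs src tgt U = ∅)
include h

theorem sum_splitWeight_of_outArcs_eq_empty :
    ∑ p ∈ outArcs (asrc src tgt) (atgt src tgt) U, splitWeight o τ p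
      = (outArcs (otail src tgt o) (ohead src tgt o) U).card := by
  rw [sum_outArcs_asrc_atgt, h, sum_empty, zero_add, outArcs_otail_ohead_of_outArcs_eq_empty h,
    natCast_card_filter]
  exact sum_congr rfl fun a _ => by cases ho : o a <;> simp [splitWeight, ho]

theorem sum_sub_splitWeight_of_outArcs_eq_empty :
    ∑ p ∈ outArcs (asrc src tgt) (atgt src tgt) U,
        ((if p.2 then (τ : ℤ) else 1) - splitWeight o τ p)
      = (inArcs (otail src tgt o) (ohead src tgt o) U).card := by
  rw [sum_outArcs_asrc_atgt, h, sum_empty, zero_add, inArcs_otail_ohead_of_outArcs_eq_empty h,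
    natCast_card_filter]
  exact sum_congr rfl fun a _ => by cases ho : o a <;> simp [splitWeight, ho]

end SplitWeightCuts

/-- If `D` has minimum dicut size `τ` and its underlying graph admits a nowhere-zero circular
`k`-flow, then the augmented weighted digraph (`τ` on original arcs, `1` on reverse arcs) can be
split as `x + (w - x)` with both parts `⌊τ/k⌋`-strongly-connected. -/
theorem decompose_augmented_into_two_scd (src tgt : A → V) (τ : ℕ) (k : ℚ) (hk : 2 ≤ k)
    (hmin : ∀ U : Finset V, IsDicut src tgt U → τ ≤ (outArcs src tgt U).card)
    (hflow : HasNZCircularFlow src tgt k) :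
    ∃ x : A × Bool → ℤ,
      (∀ p : A × Bool, 0 ≤ x p ∧ x p ≤ (if p.2 then (τ : ℤ) else 1)) ∧
      ∀ U : Finset V, U.Nonempty → U ≠ univ →
        ⌊(τ : ℚ) / k⌋ ≤ ∑ p ∈ outArcs (asrc src tgt) (atgt src tgt) U, x p ∧
        ⌊(τ : ℚ) / k⌋ ≤ ∑ p ∈ outArcs (asrc src tgt) (atgt src tgt) U,
            ((if p.2 then (τ : ℤ) else 1) - x p) := by
  obtain ⟨o, f, hcirc, hbd⟩ := hflow
  refine ⟨splitWeight o τ, splitWeight_nonneg_le o τ, fun U hU hU' => ?_⟩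
  obtain ⟨a, ha⟩ | hout := (outArcs src tgt U).eq_empty_or_nonempty.symm
  · have hfloor := floor_div_le_half τ hk
    have hhalf := half_le_sum_splitWeight_of_mem o τ ha
    exact ⟨hfloor.trans hhalf.1, hfloor.trans hhalf.2⟩
  rw [sum_splitWeight_of_outArcs_eq_empty τ hout, sum_sub_splitWeight_of_outArcs_eq_empty τ hout]
  set out := outArcs (otail src tgt o) (ohead src tgt o) U
  set inn := inArcs (otail src tgt o) (ohead src tgt o) U
  have hτ : (τ : ℚ) ≤ out.card + inn.card := by
    have := hmin _ (isDicut_compl_of_outArcs_eq_empty hU hU' hout)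
    rw [outArcs_compl, card_inArcs_of_outArcs_eq_empty hout o] at this
    exact_mod_cast this
  have hbal_in : (inn.card : ℚ) ≤ (k - 1) * out.card := IsCirculation.card_inArcs_le hcirc hbd U
  -- `inArcs` of the reversed orientation is, by definition, `outArcs` of `o`
  have hbal_out : (out.card : ℚ) ≤ (k - 1) * inn.card :=
    IsCirculation.card_inArcs_le (IsCirculation.symm hcirc) hbd U
  exact ⟨floor_div_le_of_le_mul (by linarith) (by push_cast; linarith),
    floor_div_le_of_le_mul (by linarith) (by push_cast; linarith)⟩
end

section
/- Let D be a digraph that is τ-strongly-connected (at least τ arcs leave every nonempty proper vertex subset) and fix a root vertex r. Then D contains τ pairwise arc-disjoint out-arborescences rooted at r, and also τ pairwise arc-disjoint in-arborescences rooted at r. -/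
open Finset

variable {V A : Type*} [Fintype V] [DecidableEq V] [Fintype A] [DecidableEq A]

set_option linter.unusedSectionVars false
set_option maxHeartbeats 1000000

/-- `IsWalk src tgt S u v l` : the list of arcs `l`, all from `S`, forms a directed walk
from `u` to `v`. -/
inductive IsWalk (src tgt : A → V) (S : Finset A) : V → V → List A → Prop
  | nil (v : V) : IsWalk src tgt S v v []
  | cons {w : V} {a : A} {l : List A} : a ∈ S → IsWalk src tgt S (tgt a) w l →
      IsWalk src tgt S (src a) w (a :: l)

/-- An out `r`-arborescence: every vertex `v ≠ r` is reached by exactly one directed walk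
from `r` using arcs of `S`. -/
def IsOutArb (src tgt : A → V) (r : V) (S : Finset A) : Prop :=
  ∀ v : V, v ≠ r → ∃! l : List A, IsWalk src tgt S r v l

/-- An in `r`-arborescence: from every vertex `v ≠ r` there is exactly one directed walk
to `r` using arcs of `S`. -/
def IsInArb (src tgt : A → V) (r : V) (S : Finset A) : Prop :=
  ∀ v : V, v ≠ r → ∃! l : List A, IsWalk src tgt S v r l

lemma walk_mono {src tgt : A → V} {S S' : Finset A} (hS : S ⊆ S') {u v : V} {l : List A}
    (h : IsWalk src tgt S u v l) : IsWalk src tgt S' u v l := by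
  induction h with
  | nil v => exact IsWalk.nil v
  | cons ha _ ih => exact IsWalk.cons (hS ha) ih

lemma walk_append {src tgt : A → V} {S : Finset A} {u v w : V} {l m : List A}
    (h1 : IsWalk src tgt S u v l) (h2 : IsWalk src tgt S v w m) :
    IsWalk src tgt S u w (l ++ m) := by
  induction h1 with
  | nil v => exact h2
  | cons ha _ ih => exact IsWalk.cons ha (ih h2)

lemma walk_end {src tgt : A → V} {S : Finset A} {W : Finset V} {u v : V} {l : List A}
    (hW : ∀ a ∈ S, tgt a ∈ W) (h : IsWalk src tgt S u v l) (hu : u ∈ W) : v ∈ W := by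
  induction h with
  | nil v => exact hu
  | cons ha _ ih => exact ih (hW _ ha)

lemma walk_cases {src tgt : A → V} {S : Finset A} {x v : V} {l : List A}
    (h : IsWalk src tgt S x v l) :
    (l = [] ∧ v = x) ∨ ∃ a l', l = a :: l' ∧ a ∈ S ∧ src a = x ∧ IsWalk src tgt S (tgt a) v l' := by
  cases h with
  | nil => exact Or.inl ⟨rfl, rfl⟩
  | cons ha h => exact Or.inr ⟨_, _, rfl, ha, rfl, h⟩

lemma walk_split {src tgt : A → V} {F : Finset A} {a0 : A}
    (hstuck : ∀ a ∈ insert a0 F, src a ≠ tgt a0) {u v : V} {l : List A}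
    (h : IsWalk src tgt (insert a0 F) u v l) :
    IsWalk src tgt F u v l ∨
      ∃ l', l = l' ++ [a0] ∧ IsWalk src tgt F u (src a0) l' ∧ v = tgt a0 := by
  induction h with
  | nil v => exact Or.inl (IsWalk.nil v)
  | @cons w a l ha h ih =>
    by_cases hA : a = a0
    · subst hA
      rcases walk_cases h with ⟨rfl, rfl⟩ | ⟨b, l', rfl, hb, hsb, _⟩
      · exact Or.inr ⟨[], rfl, IsWalk.nil _, rfl⟩
      · exact absurd hsb (hstuck _ hb)
    · rcases ih with h' | ⟨l', rfl, hl', rfl⟩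
      · exact Or.inl (IsWalk.cons (Finset.mem_of_mem_insert_of_ne ha hA) h')
      · exact Or.inr ⟨a :: l', rfl, IsWalk.cons (Finset.mem_of_mem_insert_of_ne ha hA) hl', rfl⟩

lemma extend_unique {src tgt : A → V} {F : Finset A} {W : Finset V} {r : V} {a0 : A}
    (hFW : ∀ a ∈ F, src a ∈ W ∧ tgt a ∈ W) (hr : r ∈ W)
    (hs : src a0 ∈ W) (ht : tgt a0 ∉ W)
    (hwalk : ∀ v ∈ W, ∃! l, IsWalk src tgt F r v l) :
    ∀ v ∈ insert (tgt a0) W, ∃! l, IsWalk src tgt (insert a0 F) r v l := by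
  have hstuck : ∀ a ∈ insert a0 F, src a ≠ tgt a0 := by
    intro a ha
    rcases Finset.mem_insert.mp ha with rfl | ha
    · exact fun h => ht (h ▸ hs)
    · exact fun h => ht (h ▸ (hFW a ha).1)
  intro v hv
  rcases Finset.mem_insert.mp hv with rfl | hv
  · obtain ⟨l1, hl1, hl1u⟩ := hwalk (src a0) hs
    refine ⟨l1 ++ [a0], walk_append (walk_mono (Finset.subset_insert _ _) hl1)
      (IsWalk.cons (Finset.mem_insert_self _ _) (IsWalk.nil _)), ?_⟩
    intro y hy
    rcases walk_split hstuck hy with h' | ⟨l', rfl, hl', _⟩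
    · exact absurd (walk_end (fun a ha => (hFW a ha).2) h' hr) ht
    · rw [hl1u l' hl']
  · obtain ⟨l1, hl1, hl1u⟩ := hwalk v hv
    refine ⟨l1, walk_mono (Finset.subset_insert _ _) hl1, ?_⟩
    intro y hy
    rcases walk_split hstuck hy with h' | ⟨l', rfl, hl', rfl⟩
    · exact hl1u y h'
    · exact absurd hv ht

lemma outArcs_inter (src tgt : A → V) (C : Finset A) (U : Finset V) :
    (outArcs src tgt U) ∩ C = C.filter fun a => src a ∈ U ∧ tgt a ∉ U := by
  ext a; simp [outArcs, and_comm]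

lemma cut_submod (src tgt : A → V) (C : Finset A) (U T : Finset V) :
    ((outArcs src tgt (U ∪ T)) ∩ C).card + ((outArcs src tgt (U ∩ T)) ∩ C).card
      ≤ ((outArcs src tgt U) ∩ C).card + ((outArcs src tgt T) ∩ C).card := by
  simp only [outArcs_inter]
  rw [Finset.card_filter, Finset.card_filter, Finset.card_filter, Finset.card_filter,
    ← Finset.sum_add_distrib, ← Finset.sum_add_distrib]
  apply Finset.sum_le_sum
  intro a _
  by_cases h1 : src a ∈ U <;> by_cases h2 : src a ∈ T <;>
    by_cases h3 : tgt a ∈ U <;> by_cases h4 : tgt a ∈ T <;>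
    simp [h1, h2, h3, h4]

lemma mem_outArcs {src tgt : A → V} {U : Finset V} {a : A} :
    a ∈ outArcs src tgt U ↔ src a ∈ U ∧ tgt a ∉ U := by
  simp [outArcs]

lemma grow (src tgt : A → V) (B : Finset A) (k : ℕ) (r : V)
    (hB : ∀ U : Finset V, r ∈ U → U ≠ univ → k + 1 ≤ ((outArcs src tgt U) ∩ B).card) :
    ∀ (n : ℕ) (W : Finset V) (F : Finset A), (univ \ W).card ≤ n → r ∈ W → F ⊆ B →
      (∀ a ∈ F, src a ∈ W ∧ tgt a ∈ W) →
      (∀ v ∈ W, ∃! l, IsWalk src tgt F r v l) →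
      (∀ U : Finset V, r ∈ U → U ≠ univ → k ≤ ((outArcs src tgt U) ∩ (B \ F)).card) →
      ∃ F' : Finset A, F' ⊆ B ∧ (∀ v : V, ∃! l, IsWalk src tgt F' r v l) ∧
        (∀ U : Finset V, r ∈ U → U ≠ univ → k ≤ ((outArcs src tgt U) ∩ (B \ F')).card) := by
  intro n
  induction n with
  | zero =>
    intro W F hcard hr hFB hFW hwalk hinv
    have hW : W = univ := by
      have : univ \ W = ∅ := Finset.card_eq_zero.mp (Nat.le_zero.mp hcard)
      have := Finset.sdiff_eq_empty_iff_subset.mp this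
      exact Finset.eq_univ_iff_forall.mpr fun v => this (mem_univ v)
    exact ⟨F, hFB, fun v => hwalk v (hW ▸ mem_univ v), hinv⟩
  | succ n ih =>
    intro W F hcard hr hFB hFW hwalk hinv
    by_cases hWu : W = univ
    · exact ⟨F, hFB, fun v => hwalk v (hWu ▸ mem_univ v), hinv⟩
    -- arcs of F do not leave any superset of W
    have hFout : ∀ U : Finset V, W ⊆ U →
        outArcs src tgt U ∩ (B \ F) = outArcs src tgt U ∩ B := by
      intro U hWU
      ext a
      simp only [mem_inter, mem_sdiff]
      constructor
      · rintro ⟨h1, h2, _⟩; exact ⟨h1, h2⟩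
      · rintro ⟨h1, h2⟩
        exact ⟨h1, h2, fun hF => (mem_outArcs.mp h1).2 (hWU (hFW a hF).2)⟩
    obtain ⟨a0, ha0BF, hsW, htW, hgood⟩ :
        ∃ a0 : A, a0 ∈ B \ F ∧ src a0 ∈ W ∧ tgt a0 ∉ W ∧
          ∀ U : Finset V, r ∈ U → U ≠ univ → a0 ∈ outArcs src tgt U →
            k + 1 ≤ ((outArcs src tgt U) ∩ (B \ F)).card := by
      set tightSets : Finset (Finset V) :=
        univ.filter (fun U => r ∈ U ∧ U ∪ W ≠ univ ∧
          ((outArcs src tgt U) ∩ (B \ F)).card = k) with htS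
      by_cases htight : tightSets.Nonempty
      · obtain ⟨U0, hU0mem, hmax⟩ := Finset.exists_max_image tightSets (fun U => U.card) htight
        obtain ⟨hrU0, hU0W, hdU0⟩ := (Finset.mem_filter.mp hU0mem).2
        have hWsub : W ⊆ U0 ∪ W := Finset.subset_union_right
        have hX : k + 1 ≤ ((outArcs src tgt (U0 ∪ W)) ∩ (B \ F)).card := by
          rw [hFout _ hWsub]
          exact hB _ (Finset.mem_union_right _ hr) hU0W
        set X := (outArcs src tgt (U0 ∪ W)) ∩ (B \ F) with hXdef
        have hsubY : X.filter (fun a => src a ∈ U0) ⊆ (outArcs src tgt U0) ∩ (B \ F) := by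
          intro a ha
          obtain ⟨haX, hsa⟩ := Finset.mem_filter.mp ha
          obtain ⟨h1, h2⟩ := Finset.mem_inter.mp haX
          exact Finset.mem_inter.mpr
            ⟨mem_outArcs.mpr ⟨hsa, fun hU => (mem_outArcs.mp h1).2 (Finset.mem_union_left _ hU)⟩, h2⟩
        have hY : (X.filter (fun a => src a ∈ U0)).card ≤ k := by
          calc (X.filter (fun a => src a ∈ U0)).card
              ≤ ((outArcs src tgt U0) ∩ (B \ F)).card := Finset.card_le_card hsubY
            _ = k := hdU0
        have hZ : (X.filter (fun a => ¬ src a ∈ U0)).Nonempty := by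
          rw [← Finset.card_pos]
          have := Finset.card_filter_add_card_filter_not
            (s := X) (p := fun a => src a ∈ U0)
          omega
        obtain ⟨a0, ha0⟩ := hZ
        obtain ⟨ha0X, hsnU0⟩ := Finset.mem_filter.mp ha0
        obtain ⟨ha0out, ha0BF⟩ := Finset.mem_inter.mp ha0X
        obtain ⟨hsUW, htUW⟩ := mem_outArcs.mp ha0out
        have hsW : src a0 ∈ W := by
          rcases Finset.mem_union.mp hsUW with h | h
          · exact absurd h hsnU0
          · exact h
        have htW : tgt a0 ∉ W := fun h => htUW (Finset.mem_union_right _ h)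
        have htU0 : tgt a0 ∉ U0 := fun h => htUW (Finset.mem_union_left _ h)
        refine ⟨a0, ha0BF, hsW, htW, ?_⟩
        intro U hrU hU ha0U
        obtain ⟨hsU, htU⟩ := mem_outArcs.mp ha0U
        by_contra hlt
        have hdU : ((outArcs src tgt U) ∩ (B \ F)).card = k := by
          have := hinv U hrU hU; omega
        -- U is tight
        have hUtight : U ∈ tightSets := by
          refine Finset.mem_filter.mpr ⟨mem_univ _, hrU, ?_, hdU⟩
          intro hcontra
          have : tgt a0 ∈ U ∪ W := hcontra ▸ mem_univ _
          rcases Finset.mem_union.mp this with h | h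
          · exact htU h
          · exact htW h
        -- U0 ∪ U is strictly bigger than U0, hence not tight
        have hss : U0 ⊂ U0 ∪ U := by
          refine Finset.ssubset_iff_of_subset Finset.subset_union_left |>.mpr ?_
          exact ⟨src a0, Finset.mem_union_right _ hsU, hsnU0⟩
        have hcup_ne : U0 ∪ U ≠ univ := by
          intro hcontra
          have : tgt a0 ∈ U0 ∪ U := hcontra ▸ mem_univ _
          rcases Finset.mem_union.mp this with h | h
          · exact htU0 h
          · exact htU h
        have hcupW_ne : (U0 ∪ U) ∪ W ≠ univ := by
          intro hcontra
          have : tgt a0 ∈ (U0 ∪ U) ∪ W := hcontra ▸ mem_univ _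
          rcases Finset.mem_union.mp this with h | h
          · rcases Finset.mem_union.mp h with h | h
            · exact htU0 h
            · exact htU h
          · exact htW h
        have hcup_not_tight : U0 ∪ U ∉ tightSets := by
          intro hmem
          have := hmax _ hmem
          have := Finset.card_lt_card hss
          omega
        have hdcup : k + 1 ≤ ((outArcs src tgt (U0 ∪ U)) ∩ (B \ F)).card := by
          have h1 := hinv (U0 ∪ U) (Finset.mem_union_left _ hrU0) hcup_ne
          rcases Nat.lt_or_ge k ((outArcs src tgt (U0 ∪ U) ∩ (B \ F)).card) with h | h
          · omega
          · exfalso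
            exact hcup_not_tight (Finset.mem_filter.mpr ⟨mem_univ _, Finset.mem_union_left _ hrU0,
              hcupW_ne, le_antisymm h h1⟩)
        have hcap_ne : U0 ∩ U ≠ univ := by
          intro hcontra
          have : tgt a0 ∈ U0 ∩ U := hcontra ▸ mem_univ _
          exact htU0 (Finset.mem_inter.mp this).1
        have hdcap : k ≤ ((outArcs src tgt (U0 ∩ U)) ∩ (B \ F)).card :=
          hinv _ (Finset.mem_inter.mpr ⟨hrU0, hrU⟩) hcap_ne
        have hsm := cut_submod src tgt (B \ F) U0 U
        omega
      · -- no tight set: any arc leaving W works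
        have hWout : ((outArcs src tgt W) ∩ (B \ F)).Nonempty := by
          rw [← Finset.card_pos, hFout W le_rfl]
          have := hB W hr hWu
          omega
        obtain ⟨a0, ha0⟩ := hWout
        obtain ⟨ha0out, ha0BF⟩ := Finset.mem_inter.mp ha0
        obtain ⟨hsW, htW⟩ := mem_outArcs.mp ha0out
        refine ⟨a0, ha0BF, hsW, htW, ?_⟩
        intro U hrU hU ha0U
        obtain ⟨hsU, htU⟩ := mem_outArcs.mp ha0U
        have hUW_ne : U ∪ W ≠ univ := by
          intro hcontra
          have : tgt a0 ∈ U ∪ W := hcontra ▸ mem_univ _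
          rcases Finset.mem_union.mp this with h | h
          · exact htU h
          · exact htW h
        have h1 := hinv U hrU hU
        rcases Nat.lt_or_ge k ((outArcs src tgt U ∩ (B \ F)).card) with h | h
        · omega
        · exfalso
          exact htight ⟨U, Finset.mem_filter.mpr ⟨mem_univ _, hrU, hUW_ne, le_antisymm h h1⟩⟩
    -- now extend the arborescence by a0 and recurse
    have ha0B : a0 ∈ B := (Finset.mem_sdiff.mp ha0BF).1
    have hcard' : (univ \ insert (tgt a0) W).card ≤ n := by
      have h1 : tgt a0 ∈ univ \ W := Finset.mem_sdiff.mpr ⟨mem_univ _, htW⟩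
      rw [Finset.sdiff_insert, Finset.card_erase_of_mem h1]
      omega
    have hF'B : insert a0 F ⊆ B := Finset.insert_subset ha0B hFB
    have hF'W : ∀ a ∈ insert a0 F, src a ∈ insert (tgt a0) W ∧ tgt a ∈ insert (tgt a0) W := by
      intro a ha
      rcases Finset.mem_insert.mp ha with rfl | ha
      · exact ⟨Finset.mem_insert_of_mem hsW, Finset.mem_insert_self _ _⟩
      · exact ⟨Finset.mem_insert_of_mem (hFW a ha).1, Finset.mem_insert_of_mem (hFW a ha).2⟩
    have hwalk' := extend_unique hFW hr hsW htW hwalk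
    have hkey : ∀ U : Finset V, r ∈ U → U ≠ univ →
        k ≤ ((outArcs src tgt U) ∩ (B \ insert a0 F)).card := by
      intro U hrU hU
      rw [Finset.sdiff_insert, Finset.inter_erase]
      by_cases hmem : a0 ∈ outArcs src tgt U ∩ (B \ F)
      · have := hgood U hrU hU (Finset.mem_inter.mp hmem).1
        rw [Finset.card_erase_of_mem hmem]
        omega
      · rw [Finset.erase_eq_of_notMem hmem]
        exact hinv U hrU hU
    exact ih (insert (tgt a0) W) (insert a0 F) hcard'
      (Finset.mem_insert_of_mem hr) hF'B hF'W hwalk' hkey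

lemma walk_reverse {src tgt : A → V} {S : Finset A} {u v : V} {l : List A}
    (h : IsWalk src tgt S u v l) : IsWalk tgt src S v u l.reverse := by
  induction h with
  | nil v => exact IsWalk.nil v
  | @cons w a l ha _ ih =>
    simpa using walk_append ih (IsWalk.cons ha (IsWalk.nil _))

lemma edmonds_aux (src tgt : A → V) (r : V) :
    ∀ (k : ℕ) (B : Finset A),
      (∀ U : Finset V, r ∈ U → U ≠ univ → k ≤ ((outArcs src tgt U) ∩ B).card) →
      ∃ S : Fin k → Finset A, (∀ i, S i ⊆ B) ∧ (∀ i j, i ≠ j → Disjoint (S i) (S j)) ∧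
        ∀ i, ∀ v : V, ∃! l, IsWalk src tgt (S i) r v l := by
  intro k
  induction k with
  | zero =>
    intro B _
    exact ⟨fun i => i.elim0, fun i => i.elim0, fun i => i.elim0, fun i => i.elim0⟩
  | succ k ih =>
    intro B hB
    -- base invariants for W = {r}, F = ∅
    have hwalk0 : ∀ v ∈ ({r} : Finset V), ∃! l, IsWalk src tgt (∅ : Finset A) r v l := by
      intro v hv
      rw [Finset.mem_singleton] at hv
      subst hv
      refine ⟨[], IsWalk.nil _, ?_⟩
      intro y hy
      rcases walk_cases hy with ⟨rfl, _⟩ | ⟨a, l', _, ha, _⟩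
      · rfl
      · exact absurd ha (Finset.notMem_empty a)
    have hinv0 : ∀ U : Finset V, r ∈ U → U ≠ univ →
        k ≤ ((outArcs src tgt U) ∩ (B \ ∅)).card := by
      intro U h1 h2
      rw [Finset.sdiff_empty]
      have := hB U h1 h2
      omega
    obtain ⟨F', hF'B, hF'walk, hF'inv⟩ := grow src tgt B k r hB (univ \ ({r} : Finset V)).card
      {r} ∅ le_rfl (Finset.mem_singleton_self r) (Finset.empty_subset _)
      (fun a ha => absurd ha (Finset.notMem_empty a)) hwalk0 hinv0
    obtain ⟨S', hS'sub, hS'disj, hS'arb⟩ := ih (B \ F') hF'inv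
    refine ⟨Fin.cases F' S', ?_, ?_, ?_⟩
    · intro i
      induction i using Fin.cases with
      | zero => simpa using hF'B
      | succ i => simpa using (hS'sub i).trans (Finset.sdiff_subset)
    · have hd0 : ∀ j, Disjoint F' (S' j) := fun j =>
        Finset.disjoint_left.mpr fun a haF haS =>
          (Finset.mem_sdiff.mp (hS'sub j haS)).2 haF
      intro i j hij
      induction i using Fin.cases with
      | zero =>
        induction j using Fin.cases with
        | zero => exact absurd rfl hij
        | succ j => simpa using hd0 j
      | succ i =>
        induction j using Fin.cases with
        | zero => simpa using (hd0 i).symm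
        | succ j =>
          simp only [Fin.cases_succ]
          exact hS'disj i j fun h => hij (by rw [h])
    · intro i
      induction i using Fin.cases with
      | zero => simpa using hF'walk
      | succ i => simpa using hS'arb i

/-- A `τ`-strongly-connected digraph contains `τ` pairwise arc-disjoint out `r`-arborescences,
and also `τ` pairwise arc-disjoint in `r`-arborescences, for any fixed root `r`. -/
theorem disjoint_arborescences (src tgt : A → V) (τ : ℕ) (r : V)
    (hsc : ∀ U : Finset V, U.Nonempty → U ≠ univ → τ ≤ (outArcs src tgt U).card) :
    (∃ S : Fin τ → Finset A,
      (∀ i j, i ≠ j → Disjoint (S i) (S j)) ∧ ∀ i, IsOutArb src tgt r (S i)) ∧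
    (∃ T : Fin τ → Finset A,
      (∀ i j, i ≠ j → Disjoint (T i) (T j)) ∧ ∀ i, IsInArb src tgt r (T i)) := by
  constructor
  · obtain ⟨S, _, hdisj, harb⟩ := edmonds_aux src tgt r τ univ (by
      intro U hrU hU
      rw [Finset.inter_univ]
      exact hsc U ⟨r, hrU⟩ hU)
    exact ⟨S, hdisj, fun i v _ => harb i v⟩
  · obtain ⟨S, _, hdisj, harb⟩ := edmonds_aux tgt src r τ univ (by
      intro U hrU hU
      rw [Finset.inter_univ]
      have h1 : outArcs tgt src U = outArcs src tgt Uᶜ := by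
        ext a; simp [outArcs]; tauto
      rw [h1]
      refine hsc Uᶜ ?_ ?_
      · exact Finset.nonempty_iff_ne_empty.mpr
          (fun h => hU ((Finset.compl_eq_empty_iff U).mp h))
      · exact fun h => (Finset.mem_compl.mp (h ▸ mem_univ r)) hrU)
    refine ⟨S, hdisj, fun i v hvr => ?_⟩
    obtain ⟨l, hl, hlu⟩ := harb i v
    refine ⟨l.reverse, walk_reverse hl, ?_⟩
    intro y hy
    have := hlu y.reverse (walk_reverse hy)
    simpa using congrArg List.reverse this
end
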